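/- Let σ be a balanced skew shape with height a and width b, i.e., a connected skew shape all of whose outward corners have displacement δ(c) = 0 (all outward corners occur on the main anti-diagonal from (a,0) to (0,b)). Then for every toggle-symmetric probability distribution μ on J(σ), the expected jaggedness of a μ-random subshape equals 2ab/(a+b). -/

import Mathlib

open Finset
open scoped Classical

noncomputable section

/-- A skew Young diagram `λ/ν` (in English notation) with height `a` and width `b`.
Rows are indexed `1,…,a` from top to bottom and columns `1,…,b` from left to right;
row `i` consists of the boxes in columns `ν i + 1, …, λ i` (each row is nonempty).
Box `[i,j]` has its southeast corner at the lattice point `(i,j)`, the point `(0,0)`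
being the northwest corner of the bounding `a × b` rectangle. -/
structure SkewShape where
  a : ℕ
  b : ℕ
  ha : 1 ≤ a
  hb : 1 ≤ b
  lam : ℕ → ℕ
  nu : ℕ → ℕ
  lam_anti : ∀ i j : ℕ, 1 ≤ i → i ≤ j → j ≤ a → lam j ≤ lam i
  nu_anti : ∀ i j : ℕ, 1 ≤ i → i ≤ j → j ≤ a → nu j ≤ nu i
  nu_lt_lam : ∀ i : ℕ, 1 ≤ i → i ≤ a → nu i < lam i
  lam_le_b : ∀ i : ℕ, 1 ≤ i → i ≤ a → lam i ≤ b
  lam_one : lam 1 = b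
  nu_a : nu a = 0

namespace SkewShape

variable (σ : SkewShape)

/-- The boxes of `σ` : pairs `[i,j]` with `1 ≤ i ≤ a` and `ν i < j ≤ λ i`.
The poset `P_σ` is the set of boxes ordered componentwise:
`[i,j] ≤ [k,l]` iff `i ≤ k` and `j ≤ l` (the product order on `ℕ × ℕ`). -/
def cells : Finset (ℕ × ℕ) :=
  (Finset.Icc 1 σ.a ×ˢ Finset.Icc 1 σ.b).filter
    (fun c => σ.nu c.1 < c.2 ∧ c.2 ≤ σ.lam c.1)

/-- The poset `P_σ` of boxes of `σ` is connected: it is nonempty, and any two boxes are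
joined by a walk along comparable pairs of boxes. -/
def Connected : Prop :=
  σ.cells.Nonempty ∧ ∀ p ∈ σ.cells, ∀ q ∈ σ.cells,
    Relation.ReflTransGen
      (fun x y : ℕ × ℕ => x ∈ σ.cells ∧ y ∈ σ.cells ∧ (x ≤ y ∨ y ≤ x)) p q

/-- `I` is an order ideal of `P_σ`, i.e. a subshape of `σ`. -/
def IsIdeal (I : Finset (ℕ × ℕ)) : Prop :=
  I ⊆ σ.cells ∧ ∀ p ∈ I, ∀ q ∈ σ.cells, q ≤ p → q ∈ I

/-- The set `J(σ)` of all order ideals of `P_σ` (equivalently, subshapes of `σ`). -/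
def idealsFinset : Finset (Finset (ℕ × ℕ)) :=
  σ.cells.powerset.filter fun I => σ.IsIdeal I

/-- Box `p` can be toggled in to the order ideal `I`. -/
def CanToggleIn (I : Finset (ℕ × ℕ)) (p : ℕ × ℕ) : Prop :=
  p ∈ σ.cells ∧ p ∉ I ∧ σ.IsIdeal (insert p I)

/-- Box `p` can be toggled out of the order ideal `I`. -/
def CanToggleOut (I : Finset (ℕ × ℕ)) (p : ℕ × ℕ) : Prop :=
  p ∈ I ∧ σ.IsIdeal (I.erase p)

/-- The jaggedness of `I`: the number of boxes that can be toggled in,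
plus the number of boxes that can be toggled out. -/
def jag (I : Finset (ℕ × ℕ)) : ℕ :=
  (σ.cells.filter fun p => σ.CanToggleIn I p).card +
  (σ.cells.filter fun p => σ.CanToggleOut I p).card

/-- The probability, under `μ`, that a random order ideal of `P_σ` satisfies `E`. -/
def pr (μ : Finset (ℕ × ℕ) → ℝ) (E : Finset (ℕ × ℕ) → Prop) : ℝ :=
  ∑ I ∈ σ.idealsFinset.filter E, μ I

/-- `μ` is a probability distribution on `J(σ)`. -/
def IsProbDist (μ : Finset (ℕ × ℕ) → ℝ) : Prop :=
  (∀ I, 0 ≤ μ I) ∧ (∑ I ∈ σ.idealsFinset, μ I = 1)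

/-- `μ` is toggle-symmetric: for every box `p` of `σ`, the probability that `p` can be
toggled in equals the probability that `p` can be toggled out. -/
def ToggleSymmetric (μ : Finset (ℕ × ℕ) → ℝ) : Prop :=
  ∀ p ∈ σ.cells,
    σ.pr μ (fun I => σ.CanToggleIn I p) = σ.pr μ (fun I => σ.CanToggleOut I p)

/-- The expectation of the statistic `f` with respect to `μ`. -/
def expect (μ : Finset (ℕ × ℕ) → ℝ) (f : Finset (ℕ × ℕ) → ℝ) : ℝ :=
  ∑ I ∈ σ.idealsFinset, μ I * f I

/-- `c` is a northwest outward corner of `σ`, occurring at the lattice point `c = (i,j)`: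
the northwest boundary of `σ` turns at `(i,j)` with its two steps
(the top edge of box `[i+1,j]` and the left edge of box `[i,j+1]`)
not bordering a common box of `σ`. -/
def IsNWCorner (c : ℕ × ℕ) : Prop :=
  (c.1 + 1, c.2) ∈ σ.cells ∧ (c.1, c.2 + 1) ∈ σ.cells ∧ (c.1, c.2) ∉ σ.cells

/-- `c` is a southeast outward corner of `σ`, occurring at the lattice point `c = (i,j)`:
the southeast boundary of `σ` turns at `(i,j)` with its two steps
(the right edge of box `[i+1,j]` and the bottom edge of box `[i,j+1]`)
not bordering a common box of `σ`. -/
def IsSECorner (c : ℕ × ℕ) : Prop :=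
  (c.1 + 1, c.2) ∈ σ.cells ∧ (c.1, c.2 + 1) ∈ σ.cells ∧ (c.1 + 1, c.2 + 1) ∉ σ.cells

/-- The set of northwest outward corners of `σ`. -/
def nwCorners : Finset (ℕ × ℕ) :=
  (Finset.range (σ.a + 1) ×ˢ Finset.range (σ.b + 1)).filter fun c => σ.IsNWCorner c

/-- The set of southeast outward corners of `σ`.
(Together, `nwCorners` and `seCorners` form the set `C(σ)` of outward corners.) -/
def seCorners : Finset (ℕ × ℕ) :=
  (Finset.range (σ.a + 1) ×ˢ Finset.range (σ.b + 1)).filter fun c => σ.IsSECorner c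

/-- The displacement `δ(c) = 1 − i/a − j/b` of a northwest corner occurring at `(i,j)`. -/
def nwDisp (c : ℕ × ℕ) : ℝ := 1 - (c.1 : ℝ) / (σ.a : ℝ) - (c.2 : ℝ) / (σ.b : ℝ)

/-- The displacement `δ(c) = −1 + i/a + j/b` of a southeast corner occurring at `(i,j)`. -/
def seDisp (c : ℕ × ℕ) : ℝ := -1 + (c.1 : ℝ) / (σ.a : ℝ) + (c.2 : ℝ) / (σ.b : ℝ)

/-- The lattice path of the subshape `I` includes both steps of the northwest corner at
`c = (i,j)`: neither box `[i+1,j]` nor box `[i,j+1]` belongs to `I`. -/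
def NWInPath (c : ℕ × ℕ) (I : Finset (ℕ × ℕ)) : Prop :=
  (c.1 + 1, c.2) ∉ I ∧ (c.1, c.2 + 1) ∉ I

/-- The lattice path of the subshape `I` includes both steps of the southeast corner at
`c = (i,j)`: both boxes `[i+1,j]` and `[i,j+1]` belong to `I`. -/
def SEInPath (c : ℕ × ℕ) (I : Finset (ℕ × ℕ)) : Prop :=
  (c.1 + 1, c.2) ∈ I ∧ (c.1, c.2 + 1) ∈ I

/-- The correction term `Σ_{c ∈ C(σ)} δ(c) · P_μ(c)`, where `P_μ(c)` is the
`μ`-probability that the lattice path of a random subshape includes both steps of `c`. -/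
def cornerCorrection (μ : Finset (ℕ × ℕ) → ℝ) : ℝ :=
  (∑ c ∈ σ.nwCorners, σ.nwDisp c * σ.pr μ (NWInPath c)) +
  (∑ c ∈ σ.seCorners, σ.seDisp c * σ.pr μ (SEInPath c))

end SkewShape

namespace SkewShape

variable (σ : SkewShape)

/-- `σ` is balanced: connected, with every outward corner of displacement `0`
(i.e. occurring on the main anti-diagonal from `(a,0)` to `(0,b)`). -/
def Balanced : Prop :=
  σ.Connected ∧ (∀ c ∈ σ.nwCorners, σ.nwDisp c = 0) ∧ ∀ c ∈ σ.seCorners, σ.seDisp c = 0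

/-- `σ` is abundant: connected, with every outward corner of displacement `≥ 0`. -/
def Abundant : Prop :=
  σ.Connected ∧ (∀ c ∈ σ.nwCorners, 0 ≤ σ.nwDisp c) ∧ ∀ c ∈ σ.seCorners, 0 ≤ σ.seDisp c

/-- `σ` is deficient: connected, with every outward corner of displacement `≤ 0`. -/
def Deficient : Prop :=
  σ.Connected ∧ (∀ c ∈ σ.nwCorners, σ.nwDisp c ≤ 0) ∧ ∀ c ∈ σ.seCorners, σ.seDisp c ≤ 0

end SkewShape

/-!
Toggle-symmetry says that, for any weights `w` on the boxes, the expected total weight of the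
boxes that can be toggled in equals that of the boxes that can be toggled out. So it suffices
to write `jag I = K + ∑_{p toggles in} w p - ∑_{p toggles out} w p` for every subshape `I`,
with `K = 2ab/(a+b)`. This holds for `w = K·δ - 1`, where `δ(i,j) = i/a + j/b - 1` is the
(southeast) displacement: reading `I` row by row through the column `r i` where its row `i`
ends, the contributions of the rows telescope (`δ` is affine and `K/a + K/b = 2`). The only
defects occur where the lattice path of `I` runs along an outward corner of `σ`, and there
`δ = 0` because `σ` is balanced. Connectedness is what makes consecutive rows overlap.
-/

theorem Relation.ReflTransGen.exists_boundary_step {α : Type*} {r : α → α → Prop}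
    {P : α → Prop} {p q : α} (h : Relation.ReflTransGen r p q) (hp : P p) (hq : ¬ P q) :
    ∃ u v, r u v ∧ P u ∧ ¬ P v := by
  by_contra! hstep
  exact hq (h.rec hp fun _ huv hu => hstep _ _ huv hu)

namespace SkewShape

variable (σ : SkewShape)

section Expectation

variable {σ} {μ : Finset (ℕ × ℕ) → ℝ}

theorem expect_const_add_sub (hμ : σ.IsProbDist μ) (c : ℝ) (f g : Finset (ℕ × ℕ) → ℝ) :
    σ.expect μ (fun I => c + f I - g I) = c + σ.expect μ f - σ.expect μ g := by
  simp only [expect, mul_sub, mul_add, sum_sub_distrib, sum_add_distrib, ← sum_mul, hμ.2,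
    one_mul]

theorem expect_sum_filter (E : Finset (ℕ × ℕ) → ℕ × ℕ → Prop) (w : ℕ × ℕ → ℝ) :
    σ.expect μ (fun I => ∑ p ∈ σ.cells.filter (fun p => E I p), w p) =
      ∑ p ∈ σ.cells, w p * σ.pr μ (fun I => E I p) := by
  simp only [expect, pr, sum_filter, mul_sum]
  rw [sum_comm]
  refine sum_congr rfl fun p _ => sum_congr rfl fun I _ => ?_
  split_ifs <;> ring

theorem expect_sum_canToggleIn_eq (hts : σ.ToggleSymmetric μ) (w : ℕ × ℕ → ℝ) :
    σ.expect μ (fun I => ∑ p ∈ σ.cells.filter (fun p => σ.CanToggleIn I p), w p) =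
      σ.expect μ (fun I => ∑ p ∈ σ.cells.filter (fun p => σ.CanToggleOut I p), w p) := by
  rw [expect_sum_filter, expect_sum_filter]
  exact sum_congr rfl fun p hp => by rw [hts p hp]

end Expectation

theorem mem_cells {i j : ℕ} :
    (i, j) ∈ σ.cells ↔ 1 ≤ i ∧ i ≤ σ.a ∧ σ.nu i < j ∧ j ≤ σ.lam i := by
  simp only [cells, mem_filter, mem_product, mem_Icc]
  constructor
  · rintro ⟨⟨⟨h1, ha⟩, -⟩, hnu, hlam⟩
    exact ⟨h1, ha, hnu, hlam⟩
  · rintro ⟨h1, ha, hnu, hlam⟩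
    exact ⟨⟨⟨h1, ha⟩, by omega, hlam.trans (σ.lam_le_b i h1 ha)⟩, hnu, hlam⟩

theorem nu_lt_lam_succ (hc : σ.Connected) {i : ℕ} (h1 : 1 ≤ i) (hi : i < σ.a) :
    σ.nu i < σ.lam (i + 1) := by
  have hp : (i, σ.lam i) ∈ σ.cells :=
    σ.mem_cells.2 ⟨h1, hi.le, σ.nu_lt_lam i h1 hi.le, le_rfl⟩
  have hq : (i + 1, σ.lam (i + 1)) ∈ σ.cells :=
    σ.mem_cells.2 ⟨by omega, hi, σ.nu_lt_lam (i + 1) (by omega) hi, le_rfl⟩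
  obtain ⟨⟨k, l⟩, ⟨k', l'⟩, ⟨hu, hv, hcomp⟩, hk, hk'⟩ :=
    (hc.2 _ hp _ hq).exists_boundary_step (P := fun x => x.1 ≤ i) le_rfl (by simp)
  simp only [not_le] at hk hk'
  have hll' : l ≤ l' := by
    rcases hcomp with h | h
    · exact (Prod.mk_le_mk.1 h).2
    · exact absurd (Prod.mk_le_mk.1 h).1 (by omega)
  rw [mem_cells] at hu hv
  have := σ.nu_anti k i hu.1 hk (by omega)
  have := σ.lam_anti (i + 1) k' (by omega) hk' hv.2.1
  omega

section Ideal

variable {σ} {I : Finset (ℕ × ℕ)}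

theorem canToggleIn_iff_forall_lt (hI : σ.IsIdeal I) {p : ℕ × ℕ} :
    σ.CanToggleIn I p ↔ p ∈ σ.cells ∧ p ∉ I ∧ ∀ q ∈ σ.cells, q < p → q ∈ I := by
  refine and_congr_right fun hp => and_congr_right fun _ => ⟨fun h q hq hqp => ?_, fun h => ?_⟩
  · exact (mem_insert.1 (h.2 p (mem_insert_self p I) q hq hqp.le)).resolve_left hqp.ne
  · refine ⟨insert_subset hp hI.1, fun x hx q hq hqx => ?_⟩
    rcases mem_insert.1 hx with rfl | hx
    · rcases hqx.lt_or_eq with hlt | rfl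
      · exact mem_insert_of_mem (h q hq hlt)
      · exact mem_insert_self _ _
    · exact mem_insert_of_mem (hI.2 x hx q hq hqx)

theorem canToggleOut_iff_forall_not_lt (hI : σ.IsIdeal I) {p : ℕ × ℕ} :
    σ.CanToggleOut I p ↔ p ∈ I ∧ ∀ q ∈ I, ¬ p < q := by
  refine and_congr_right fun hp => ⟨fun h q hq hpq => ?_, fun h => ?_⟩
  · have := h.2 q (mem_erase.2 ⟨hpq.ne', hq⟩) p (hI.1 hp) hpq.le
    exact (mem_erase.1 this).1 rfl
  · refine ⟨(erase_subset p I).trans hI.1, fun x hx q hq hqx => mem_erase.2 ⟨?_, hI.2 x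
      (mem_of_mem_erase hx) q hq hqx⟩⟩
    rintro rfl
    exact h x (mem_of_mem_erase hx) (hqx.lt_of_ne (ne_of_mem_erase hx).symm)

end Ideal

/-- The column in which row `i` of the subshape `I` ends (`ν i` if that row of `I` is empty). -/
def rowEnd (I : Finset (ℕ × ℕ)) (i : ℕ) : ℕ :=
  max (σ.nu i) ((I.filter fun p => p.1 = i).sup Prod.snd)

/-- `r i` is the column in which row `i` of a subshape ends; this encodes the lattice path
separating the subshape from the rest of `σ`. -/
def IsLatticePath (r : ℕ → ℕ) : Prop :=
  (∀ i, 1 ≤ i → i ≤ σ.a → σ.nu i ≤ r i ∧ r i ≤ σ.lam i) ∧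
    ∀ i, 1 ≤ i → i < σ.a → r (i + 1) ≤ r i

def AddableRow (r : ℕ → ℕ) (i : ℕ) : Prop :=
  r i < σ.lam i ∧ (i = 1 ∨ r i < r (i - 1))

def RemovableRow (r : ℕ → ℕ) (i : ℕ) : Prop :=
  σ.nu i < r i ∧ (i = σ.a ∨ r (i + 1) < r i)

section RowEnd

variable {σ} {I : Finset (ℕ × ℕ)}

theorem nu_le_rowEnd (I : Finset (ℕ × ℕ)) (i : ℕ) : σ.nu i ≤ σ.rowEnd I i :=
  le_max_left _ _

theorem rowEnd_le_lam (hI : σ.IsIdeal I) {i : ℕ} (h1 : 1 ≤ i) (ha : i ≤ σ.a) :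
    σ.rowEnd I i ≤ σ.lam i := by
  refine max_le (σ.nu_lt_lam i h1 ha).le (Finset.sup_le fun q hq => ?_)
  obtain ⟨hqI, rfl⟩ := mem_filter.1 hq
  exact (σ.mem_cells.1 (hI.1 hqI)).2.2.2

theorem mem_iff_le_rowEnd (hI : σ.IsIdeal I) {i j : ℕ} (hij : (i, j) ∈ σ.cells) :
    (i, j) ∈ I ↔ j ≤ σ.rowEnd I i := by
  have hnu := (σ.mem_cells.1 hij).2.2.1
  refine ⟨fun h => le_max_of_le_right (le_sup (f := Prod.snd)
    (mem_filter.2 ⟨h, rfl⟩ : (i, j) ∈ I.filter fun p => p.1 = i)), fun h => ?_⟩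
  obtain ⟨⟨k, l⟩, hq, hjl⟩ :=
    (Finset.le_sup_iff (by rw [Nat.bot_eq_zero]; omega)).1
      ((le_max_iff.1 h).resolve_left (by omega))
  obtain ⟨hqI, rfl : k = i⟩ := mem_filter.1 hq
  exact hI.2 _ hqI _ hij (Prod.mk_le_mk.2 ⟨le_rfl, hjl⟩)

theorem rowEnd_antitone (hI : σ.IsIdeal I) {i k : ℕ} (h1 : 1 ≤ i) (hik : i ≤ k)
    (hk : k ≤ σ.a) : σ.rowEnd I k ≤ σ.rowEnd I i := by
  by_cases ht : σ.rowEnd I k ≤ σ.nu i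
  · exact ht.trans (σ.nu_le_rowEnd I i)
  have hnu := σ.nu_anti i k h1 hik hk
  have hlam := σ.lam_anti i k h1 hik hk
  have htk := σ.rowEnd_le_lam hI (h1.trans hik) hk
  have hk' : (k, σ.rowEnd I k) ∈ I :=
    (mem_iff_le_rowEnd hI (σ.mem_cells.2 ⟨by omega, hk, by omega, htk⟩)).2 le_rfl
  have hi : (i, σ.rowEnd I k) ∈ σ.cells := σ.mem_cells.2 ⟨h1, by omega, by omega, by omega⟩
  exact (mem_iff_le_rowEnd hI hi).1 (hI.2 _ hk' _ hi (Prod.mk_le_mk.2 ⟨hik, le_rfl⟩))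

theorem isLatticePath_rowEnd (hI : σ.IsIdeal I) : σ.IsLatticePath (σ.rowEnd I) :=
  ⟨fun _ h1 ha => ⟨σ.nu_le_rowEnd I _, σ.rowEnd_le_lam hI h1 ha⟩,
    fun _ h1 ha => σ.rowEnd_antitone hI h1 (Nat.le_succ _) ha⟩

theorem canToggleIn_iff_addableRow (hI : σ.IsIdeal I) {i j : ℕ} :
    σ.CanToggleIn I (i, j) ↔
      i ∈ Icc 1 σ.a ∧ σ.AddableRow (σ.rowEnd I) i ∧ j = σ.rowEnd I i + 1 := by
  rw [canToggleIn_iff_forall_lt hI, mem_Icc, AddableRow]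
  have hnu := σ.nu_le_rowEnd I i
  constructor
  · rintro ⟨hij, hjI, hlt⟩
    obtain ⟨h1, ha, -, hlam⟩ := σ.mem_cells.1 hij
    have hr : σ.rowEnd I i < j := not_le.1 fun h => hjI ((mem_iff_le_rowEnd hI hij).2 h)
    have hj : j = σ.rowEnd I i + 1 := by
      by_contra hne
      have hleft : (i, j - 1) ∈ σ.cells := σ.mem_cells.2 ⟨h1, ha, by omega, by omega⟩
      have := (mem_iff_le_rowEnd hI hleft).1
        (hlt _ hleft (Prod.mk_lt_mk.2 (Or.inr ⟨le_rfl, by omega⟩)))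
      omega
    refine ⟨⟨h1, ha⟩, ⟨by omega, ?_⟩, hj⟩
    refine or_iff_not_imp_left.2 fun hi1 => not_le.1 fun hup => ?_
    have hdown := σ.rowEnd_antitone hI (i := i - 1) (by omega) (by omega) ha
    have := σ.lam_anti (i - 1) i (by omega) (by omega) ha
    have := σ.nu_le_rowEnd I (i - 1)
    have hup' : (i - 1, j) ∈ σ.cells := σ.mem_cells.2 ⟨by omega, by omega, by omega, by omega⟩
    have := (mem_iff_le_rowEnd hI hup').1
      (hlt _ hup' (Prod.mk_lt_mk.2 (Or.inl ⟨by omega, le_rfl⟩)))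
    omega
  · rintro ⟨⟨h1, ha⟩, ⟨hlam, hprev⟩, rfl⟩
    have hij : (i, σ.rowEnd I i + 1) ∈ σ.cells := σ.mem_cells.2 ⟨h1, ha, by omega, hlam⟩
    refine ⟨hij, fun h => by simpa using (mem_iff_le_rowEnd hI hij).1 h, ?_⟩
    rintro ⟨k, l⟩ hkl hlt
    obtain ⟨hk1, hka, -⟩ := σ.mem_cells.1 hkl
    obtain ⟨hki, hl⟩ := Prod.mk_le_mk.1 hlt.le
    refine (mem_iff_le_rowEnd hI hkl).2 ?_
    rcases hki.lt_or_eq with hki | rfl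
    · have := σ.rowEnd_antitone hI hk1 (Nat.le_sub_one_of_lt hki) (by omega)
      omega
    · have : l ≠ σ.rowEnd I k + 1 := fun h => hlt.ne (by rw [h])
      omega

theorem canToggleOut_iff_removableRow (hI : σ.IsIdeal I) {i j : ℕ} :
    σ.CanToggleOut I (i, j) ↔
      i ∈ Icc 1 σ.a ∧ σ.RemovableRow (σ.rowEnd I) i ∧ j = σ.rowEnd I i := by
  rw [canToggleOut_iff_forall_not_lt hI, mem_Icc, RemovableRow]
  constructor
  · rintro ⟨hijI, hmax⟩
    have hij := hI.1 hijI
    obtain ⟨h1, ha, hnu, hlam⟩ := σ.mem_cells.1 hij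
    have hr := (mem_iff_le_rowEnd hI hij).1 hijI
    have htop := σ.rowEnd_le_lam hI h1 ha
    have hj : j = σ.rowEnd I i := by
      by_contra hne
      have hright : (i, j + 1) ∈ σ.cells := σ.mem_cells.2 ⟨h1, ha, by omega, by omega⟩
      exact hmax _ ((mem_iff_le_rowEnd hI hright).2 (by omega))
        (Prod.mk_lt_mk.2 (Or.inr ⟨le_rfl, by omega⟩))
    refine ⟨⟨h1, ha⟩, ⟨by omega, ?_⟩, hj⟩
    refine or_iff_not_imp_left.2 fun hia => not_le.1 fun hdown => ?_
    have := σ.nu_anti i (i + 1) h1 (by omega) (by omega)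
    have := σ.rowEnd_le_lam hI (i := i + 1) (by omega) (by omega)
    have hbelow : (i + 1, j) ∈ σ.cells := σ.mem_cells.2 ⟨by omega, by omega, by omega, by omega⟩
    exact hmax _ ((mem_iff_le_rowEnd hI hbelow).2 (by omega))
      (Prod.mk_lt_mk.2 (Or.inl ⟨by omega, le_rfl⟩))
  · rintro ⟨⟨h1, ha⟩, ⟨hnu, hnext⟩, rfl⟩
    have hij : (i, σ.rowEnd I i) ∈ σ.cells :=
      σ.mem_cells.2 ⟨h1, ha, hnu, σ.rowEnd_le_lam hI h1 ha⟩
    refine ⟨(mem_iff_le_rowEnd hI hij).2 le_rfl, ?_⟩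
    rintro ⟨k, l⟩ hklI hlt
    obtain ⟨hk1, hka, -⟩ := σ.mem_cells.1 (hI.1 hklI)
    have hl := (mem_iff_le_rowEnd hI (hI.1 hklI)).1 hklI
    obtain ⟨hik, hrl⟩ := Prod.mk_le_mk.1 hlt.le
    rcases hik.lt_or_eq with hik | rfl
    · have := σ.rowEnd_antitone hI (i := i + 1) (by omega) hik hka
      omega
    · have : l ≠ σ.rowEnd I i := fun h => hlt.ne (by rw [h])
      omega

theorem sum_filter_canToggleIn (hI : σ.IsIdeal I) (f : ℕ × ℕ → ℝ) :
    ∑ p ∈ σ.cells.filter (fun p => σ.CanToggleIn I p), f p =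
      ∑ i ∈ Icc 1 σ.a, if σ.AddableRow (σ.rowEnd I) i then f (i, σ.rowEnd I i + 1) else 0 := by
  rw [← sum_filter, ← sum_image (g := fun i => (i, σ.rowEnd I i + 1))
    fun _ _ _ _ h => congrArg Prod.fst h]
  congr 1
  ext ⟨i, j⟩
  rw [mem_filter, and_iff_right_of_imp fun h => h.1, canToggleIn_iff_addableRow hI]
  simp only [mem_image, mem_filter, Prod.mk.injEq]
  constructor
  · rintro ⟨hi, hadd, rfl⟩
    exact ⟨i, ⟨hi, hadd⟩, rfl, rfl⟩
  · rintro ⟨k, ⟨hk, hadd⟩, rfl, rfl⟩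
    exact ⟨hk, hadd, rfl⟩

theorem sum_filter_canToggleOut (hI : σ.IsIdeal I) (f : ℕ × ℕ → ℝ) :
    ∑ p ∈ σ.cells.filter (fun p => σ.CanToggleOut I p), f p =
      ∑ i ∈ Icc 1 σ.a, if σ.RemovableRow (σ.rowEnd I) i then f (i, σ.rowEnd I i) else 0 := by
  rw [← sum_filter, ← sum_image (g := fun i => (i, σ.rowEnd I i))
    fun _ _ _ _ h => congrArg Prod.fst h]
  congr 1
  ext ⟨i, j⟩
  rw [mem_filter, and_iff_right_of_imp fun h => hI.1 h.1, canToggleOut_iff_removableRow hI]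
  simp only [mem_image, mem_filter, Prod.mk.injEq]
  constructor
  · rintro ⟨hi, hrem, rfl⟩
    exact ⟨i, ⟨hi, hrem⟩, rfl, rfl⟩
  · rintro ⟨k, ⟨hk, hrem⟩, rfl, rfl⟩
    exact ⟨hk, hrem, rfl⟩

end RowEnd

theorem mem_range_of_corner {i j : ℕ} (hbelow : (i + 1, j) ∈ σ.cells)
    (hright : (i, j + 1) ∈ σ.cells) : (i, j) ∈ range (σ.a + 1) ×ˢ range (σ.b + 1) := by
  obtain ⟨-, ha, -⟩ := σ.mem_cells.1 hbelow
  obtain ⟨h1, hia, -, hlam⟩ := σ.mem_cells.1 hright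
  have := σ.lam_le_b i h1 hia
  exact mem_product.2 ⟨mem_range.2 (by omega), mem_range.2 (by omega)⟩

section Corner

variable {σ}

theorem seDisp_eq_zero_of_se_corner (hbal : σ.Balanced) {i j : ℕ}
    (hbelow : (i + 1, j) ∈ σ.cells) (hright : (i, j + 1) ∈ σ.cells)
    (hcorner : (i + 1, j + 1) ∉ σ.cells) : σ.seDisp (i, j) = 0 :=
  hbal.2.2 _ (mem_filter.2 ⟨σ.mem_range_of_corner hbelow hright, hbelow, hright, hcorner⟩)

theorem seDisp_eq_zero_of_nw_corner (hbal : σ.Balanced) {i j : ℕ}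
    (hbelow : (i + 1, j) ∈ σ.cells) (hright : (i, j + 1) ∈ σ.cells)
    (hcorner : (i, j) ∉ σ.cells) : σ.seDisp (i, j) = 0 := by
  have := hbal.2.1 _ (mem_filter.2 ⟨σ.mem_range_of_corner hbelow hright, hbelow, hright, hcorner⟩)
  rw [nwDisp] at this
  rw [seDisp]
  linarith

end Corner

def harmonicMean : ℝ := 2 * σ.a * σ.b / (σ.a + σ.b)

theorem harmonicMean_div_add_div : σ.harmonicMean / σ.a + σ.harmonicMean / σ.b = 2 := by
  have ha : (σ.a : ℝ) ≠ 0 := by have := σ.ha; positivity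
  have hb : (σ.b : ℝ) ≠ 0 := by have := σ.hb; positivity
  rw [harmonicMean]
  field_simp
  ring

def toggleWeight (p : ℕ × ℕ) : ℝ := σ.harmonicMean * σ.seDisp p - 1

def rowTerm (r : ℕ → ℕ) (i : ℕ) : ℝ :=
  (if σ.AddableRow r i then 1 - σ.toggleWeight (i, r i + 1) else 0) +
    if σ.RemovableRow r i then 1 + σ.toggleWeight (i, r i) else 0

/-- The sum of `σ.rowTerm r i` over the rows `i ≥ m`. -/
def rowPotential (r : ℕ → ℕ) (m : ℕ) : ℝ :=
  σ.harmonicMean * r m / σ.b + if σ.AddableRow r m then 1 - σ.toggleWeight (m, r m + 1) else 0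

section RowSums

variable {σ} {r : ℕ → ℕ}

theorem rowTerm_eq_sub (hbal : σ.Balanced) (hr : σ.IsLatticePath r) {m : ℕ} (h1 : 1 ≤ m)
    (hm : m < σ.a) : σ.rowTerm r m = σ.rowPotential r m - σ.rowPotential r (m + 1) := by
  obtain ⟨hnu, hlam⟩ := hr.1 m h1 hm.le
  obtain ⟨hnu', hlam'⟩ := hr.1 (m + 1) (by omega) hm
  have hov := σ.nu_lt_lam_succ hbal.1 h1 hm
  have hrow := σ.nu_lt_lam m h1 hm.le
  have hrow' := σ.nu_lt_lam (m + 1) (by omega) hm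
  have hK := σ.harmonicMean_div_add_div
  have hm' : m + 1 ≠ 1 := by omega
  have hma : m ≠ σ.a := hm.ne
  simp only [rowTerm, rowPotential, AddableRow, RemovableRow, toggleWeight, seDisp,
    Nat.add_sub_cancel, hm', hma, false_or]
  rcases (hr.2 m h1 hm).eq_or_lt with hflat | hdrop
  · simp only [hflat, lt_irrefl, and_false, if_false]
    ring
  by_cases hrem : σ.nu m < r m
  · by_cases hadd : r (m + 1) < σ.lam (m + 1)
    · rw [if_pos ⟨hrem, hdrop⟩, if_pos ⟨hadd, hdrop⟩]
      push_cast
      linear_combination (-1 : ℝ) * hK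
    · have hc := seDisp_eq_zero_of_se_corner hbal (i := m) (j := r (m + 1))
        (σ.mem_cells.2 ⟨by omega, hm, by omega, by omega⟩)
        (σ.mem_cells.2 ⟨h1, hm.le, by omega, by omega⟩)
        fun h => by have := (σ.mem_cells.1 h).2.2.2; omega
      rw [if_pos ⟨hrem, hdrop⟩, if_neg fun h => hadd h.1]
      simp only [seDisp] at hc
      push_cast at hc ⊢
      linear_combination σ.harmonicMean * hc
  · have hc := seDisp_eq_zero_of_nw_corner hbal (i := m) (j := r m)
      (σ.mem_cells.2 ⟨by omega, hm, by omega, by omega⟩)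
      (σ.mem_cells.2 ⟨h1, hm.le, by omega, by omega⟩)
      fun h => by have := (σ.mem_cells.1 h).2.2.1; omega
    rw [if_neg fun h => hrem h.1, if_pos ⟨by omega, hdrop⟩]
    simp only [seDisp] at hc
    push_cast at hc ⊢
    linear_combination (-1 : ℝ) * hK - σ.harmonicMean * hc

theorem rowTerm_last : σ.rowTerm r σ.a = σ.rowPotential r σ.a := by
  have ha : (σ.a : ℝ) ≠ 0 := by have := σ.ha; positivity
  have hrem : (if σ.RemovableRow r σ.a then 1 + σ.toggleWeight (σ.a, r σ.a) else 0) =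
      σ.harmonicMean * r σ.a / σ.b := by
    by_cases h : σ.nu σ.a < r σ.a
    · rw [if_pos ⟨h, Or.inl rfl⟩, toggleWeight, seDisp, div_self ha]
      ring
    · rw [if_neg fun h' => h h'.1, show r σ.a = 0 by have := σ.nu_a; omega]
      simp
  rw [rowTerm, rowPotential, hrem, add_comm]

theorem rowPotential_one (hr : σ.IsLatticePath r) : σ.rowPotential r 1 = σ.harmonicMean := by
  have hb : (σ.b : ℝ) ≠ 0 := by have := σ.hb; positivity
  have hK := σ.harmonicMean_div_add_div
  have hle := (hr.1 1 le_rfl σ.ha).2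
  rw [σ.lam_one] at hle
  simp only [rowPotential, AddableRow, toggleWeight, seDisp, σ.lam_one, true_or, and_true]
  split_ifs with hadd
  · push_cast
    linear_combination (-1 : ℝ) * hK
  · rw [show r 1 = σ.b by omega]
    simp [hb]

theorem sum_rowTerm (hbal : σ.Balanced) (hr : σ.IsLatticePath r) :
    ∑ i ∈ Icc 1 σ.a, σ.rowTerm r i = σ.harmonicMean := by
  rw [← Ico_add_one_right_eq_Icc, sum_Ico_succ_top σ.ha, rowTerm_last,
    sum_congr rfl fun i hi => rowTerm_eq_sub hbal hr (mem_Ico.1 hi).1 (mem_Ico.1 hi).2,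
    ← rowPotential_one hr]
  have := sum_Ico_sub (σ.rowPotential r) σ.ha
  simp only [← neg_sub (σ.rowPotential r (_ + 1)), sum_neg_distrib]
  linarith

theorem jag_eq (hbal : σ.Balanced) {I : Finset (ℕ × ℕ)} (hI : σ.IsIdeal I) :
    (σ.jag I : ℝ) = σ.harmonicMean +
      ∑ p ∈ σ.cells.filter (fun p => σ.CanToggleIn I p), σ.toggleWeight p -
      ∑ p ∈ σ.cells.filter (fun p => σ.CanToggleOut I p), σ.toggleWeight p := by
  rw [← sum_rowTerm hbal (isLatticePath_rowEnd hI), jag, Nat.cast_add, cast_card, cast_card,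
    sum_filter_canToggleIn hI, sum_filter_canToggleIn hI, sum_filter_canToggleOut hI,
    sum_filter_canToggleOut hI, ← sum_add_distrib, ← sum_add_distrib, ← sum_sub_distrib]
  refine sum_congr rfl fun i _ => ?_
  simp only [rowTerm]
  split_ifs <;> ring

end RowSums

end SkewShape

/-- Corollary 3.10: for a balanced skew shape `σ` with height `a` and
width `b`, the expected jaggedness of a subshape with respect to any toggle-symmetric
probability distribution on `J(σ)` is exactly the harmonic mean `2ab/(a+b)`. -/
theorem SkewShape.expected_jaggedness_balanced (σ : SkewShape) (hbal : σ.Balanced)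
    (μ : Finset (ℕ × ℕ) → ℝ) (hμ : σ.IsProbDist μ) (hts : σ.ToggleSymmetric μ) :
    σ.expect μ (fun I => (σ.jag I : ℝ)) =
      2 * (σ.a : ℝ) * (σ.b : ℝ) / ((σ.a : ℝ) + (σ.b : ℝ)) := by
  calc σ.expect μ (fun I => (σ.jag I : ℝ))
      = σ.expect μ (fun I => σ.harmonicMean +
          ∑ p ∈ σ.cells.filter (fun p => σ.CanToggleIn I p), σ.toggleWeight p -
          ∑ p ∈ σ.cells.filter (fun p => σ.CanToggleOut I p), σ.toggleWeight p) :=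
        sum_congr rfl fun I hI => congrArg (μ I * ·) (jag_eq hbal (mem_filter.1 hI).2)
    _ = σ.harmonicMean := by
        rw [expect_const_add_sub hμ, expect_sum_canToggleIn_eq hts, add_sub_cancel_right]
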